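/- Let T be a set of permutations and let kT1 denote the set of permutations obtained by replacing each π ∈ T of length m by the permutation of length m+2 given by (m+2), π^{+1}, 1. Then F_{kT1}(x)·(1 − x − x²·F_T(x)) = 1 as formal power series over ℚ, where F_S(x) = Σ_{n≥0} |I_n(3412, S)| xⁿ for a set S of patterns. -/

import Mathlib

/-!
A 3412-avoiding involution `π` with `π(1) = K + 1` maps `{1, …, K + 1}` onto itself, so it is a
direct sum `α ⊕ β` of an involution `α` of length `K + 1` starting with its maximum and an
involution `β`. Every pattern of `{3412} ∪ kT1` has its first entry above its last, hence cannot
straddle the two blocks, so `π ∈ I(3412, S)` if and only if `α` and `β` are. This gives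
`F_S = 1 + x G_S F_S`, where `G_S` counts the possible blocks `α` by length minus one. For
`S = kT1` the block is `1`, or `(K + 1) τ^{+1} 1` with `τ ∈ I_{K-1}(3412, T)`, so
`G_{kT1} = 1 + x F_T`.
-/

/-- `π` (a sequence of length `n` with values in `Fin n`) contains the pattern `σ` of length `k`:
there is a strictly increasing choice of positions on which `π` has the same pairwise
comparisons as `σ`. -/
def Contains {n k : ℕ} (π : Fin n → Fin n) (σ : Fin k → Fin k) : Prop :=
  ∃ f : Fin k → Fin n, StrictMono f ∧ ∀ a b : Fin k, σ a < σ b ↔ π (f a) < π (f b)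

/-- `π` avoids the pattern `σ`. -/
def Avoids {n k : ℕ} (π : Fin n → Fin n) (σ : Fin k → Fin k) : Prop :=
  ¬ Contains π σ

/-- The pattern 3412, written 0-indexed. -/
def pat3412 : Fin 4 → Fin 4 := ![2, 3, 0, 1]

/-- The permutation `(m+2) σ^{+1} 1` of length `m+2` (written 0-indexed): first entry `m+2`,
then `σ` with every entry increased by `1`, then a final entry `1`. -/
def extBoth {m : ℕ} (σ : Fin m → Fin m) : Fin (m + 2) → Fin (m + 2) := fun i =>
  if h0 : (i : ℕ) = 0 then ⟨m + 1, by omega⟩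
  else if h1 : (i : ℕ) ≤ m then
    have hlt : (i : ℕ) - 1 < m := by omega
    ⟨(σ ⟨(i : ℕ) - 1, hlt⟩ : ℕ) + 1, by have := (σ ⟨(i : ℕ) - 1, hlt⟩).isLt; omega⟩
  else ⟨0, by omega⟩

/-- `π` avoids every pattern in the set `T` (patterns of arbitrary lengths). -/
def AvoidsAll {n : ℕ} (π : Fin n → Fin n) (T : Set ((m : ℕ) × (Fin m → Fin m))) : Prop :=
  ∀ σ ∈ T, Avoids π σ.2

/-- `F_T(x) = Σ_{n≥0} |I_n(3412, T)| xⁿ` for a set `T` of patterns. -/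
noncomputable def FSet (T : Set ((m : ℕ) × (Fin m → Fin m))) : PowerSeries ℚ :=
  PowerSeries.mk fun n =>
    (Nat.card {π : Fin n → Fin n //
      Function.Involutive π ∧ Avoids π pat3412 ∧ AvoidsAll π T} : ℚ)

/-- The operation taking a pattern `π` of length `m` to `(m+2) π^{+1} 1` of length `m+2`. -/
def kOne : ((m : ℕ) × (Fin m → Fin m)) → ((m : ℕ) × (Fin m → Fin m)) :=
  fun s => ⟨s.1 + 2, extBoth s.2⟩

def IsOccurrence {n k : ℕ} (π : Fin n → Fin n) (σ : Fin k → Fin k) (f : Fin k → Fin n) : Prop :=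
  StrictMono f ∧ ∀ a b : Fin k, σ a < σ b ↔ π (f a) < π (f b)

section Occurrence

variable {n m k : ℕ} {π : Fin n → Fin n} {α : Fin m → Fin m} {σ : Fin k → Fin k}

theorem IsOccurrence.contains {f : Fin k → Fin n} (hf : IsOccurrence π σ f) : Contains π σ :=
  ⟨f, hf⟩

theorem IsOccurrence.comp {g : Fin m → Fin n} {f : Fin k → Fin m} (hg : IsOccurrence π α g)
    (hf : IsOccurrence α σ f) : IsOccurrence π σ (g ∘ f) :=
  ⟨hg.1.comp hf.1, fun a b => (hf.2 a b).trans (hg.2 _ _)⟩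

theorem Contains.trans (h₁ : Contains π α) (h₂ : Contains α σ) : Contains π σ := by
  obtain ⟨g, hg⟩ : ∃ g, IsOccurrence π α g := h₁
  obtain ⟨f, hf⟩ : ∃ f, IsOccurrence α σ f := h₂
  exact (hg.comp hf).contains

theorem Avoids.of_contains (h : Avoids π σ) (hα : Contains π α) : Avoids α σ :=
  fun hσ => h (hα.trans hσ)

theorem isOccurrence_of_apply_eq {e v : Fin m → Fin n} (he : StrictMono e) (hv : StrictMono v)
    (h : ∀ i, π (e i) = v (α i)) : IsOccurrence π α e :=
  ⟨he, fun a b => by rw [h, h, hv.lt_iff_lt]⟩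

theorem IsOccurrence.of_comp {e v : Fin m → Fin n} (he : StrictMono e) (hv : StrictMono v)
    (h : ∀ i, π (e i) = v (α i)) {g : Fin k → Fin m} (hg : IsOccurrence π σ (e ∘ g)) :
    IsOccurrence α σ g :=
  ⟨fun a b hab => he.lt_iff_lt.mp (hg.1 hab), fun a b => by
    rw [hg.2, Function.comp_apply, Function.comp_apply, h, h, hv.lt_iff_lt]⟩

end Occurrence

theorem contains_3412 {n : ℕ} {π : Fin n → Fin n} {p₀ p₁ p₂ p₃ : Fin n}
    (h₀₁ : p₀ < p₁) (h₁₂ : p₁ < p₂) (h₂₃ : p₂ < p₃)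
    (v₂₃ : π p₂ < π p₃) (v₃₀ : π p₃ < π p₀) (v₀₁ : π p₀ < π p₁) : Contains π pat3412 := by
  refine ⟨![p₀, p₁, p₂, p₃], Fin.strictMono_iff_lt_succ.mpr ?_, ?_⟩
  · intro i
    fin_cases i <;> simpa
  · intro a b
    fin_cases a <;> fin_cases b <;> simp [pat3412] <;> order

/-- A position `i < π 0` with `π 0 < π i` would give the occurrence `0, i, π 0, π i` of 3412. -/
theorem le_apply_zero_iff {n : ℕ} [NeZero n] {π : Fin n → Fin n}
    (hπ : Function.Involutive π) (hav : Avoids π pat3412) (i : Fin n) :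
    i ≤ π 0 ↔ π i ≤ π 0 := by
  have key : ∀ i, i ≤ π 0 → π i ≤ π 0 := by
    intro i hi
    by_contra! hlt
    rcases hi.lt_or_eq with hi | rfl
    · rcases (Fin.zero_le i).lt_or_eq with h0 | rfl
      · exact hav (contains_3412 h0 hi hlt (by rwa [hπ, hπ]) (by rwa [hπ]) hlt)
      · exact hlt.ne rfl
    · exact (hlt.trans_le ((hπ 0).symm ▸ Fin.zero_le _)).false
  refine ⟨key i, fun h => ?_⟩
  by_contra! hlt
  simpa [hπ i] using (key (π i) h).trans_lt hlt

/-- The direct sum `α ⊕ β`. -/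
def dsum {a b : ℕ} (α : Fin a → Fin a) (β : Fin b → Fin b) : Fin (a + b) → Fin (a + b) :=
  Fin.append (fun i => Fin.castAdd b (α i)) (fun j => Fin.natAdd a (β j))

/-- `a` and `b` are the first and the last position. -/
def FirstGtLast {k : ℕ} (σ : Fin k → Fin k) : Prop :=
  ∃ a b : Fin k, (∀ c, a ≤ c ∧ c ≤ b) ∧ σ b < σ a

theorem FirstGtLast.avoids {k n : ℕ} {σ : Fin k → Fin k} (hσ : FirstGtLast σ)
    [Subsingleton (Fin n)] (π : Fin n → Fin n) : Avoids π σ := by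
  rintro ⟨f, -, hf⟩
  obtain ⟨a, b, -, hlt⟩ := hσ
  have := (hf b a).mp hlt
  rw [Subsingleton.elim (f b) (f a)] at this
  exact lt_irrefl _ this

section DirectSum

variable {a b k : ℕ} {α α' : Fin a → Fin a} {β β' : Fin b → Fin b}

@[simp]
theorem dsum_castAdd (i : Fin a) : dsum α β (Fin.castAdd b i) = Fin.castAdd b (α i) :=
  Fin.append_left _ _ i

@[simp]
theorem dsum_natAdd (j : Fin b) : dsum α β (Fin.natAdd a j) = Fin.natAdd a (β j) :=
  Fin.append_right _ _ j

theorem dsum_zero [NeZero a] : dsum α β 0 = Fin.castAdd b (α 0) := by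
  rw [← dsum_castAdd]; rfl

theorem dsum_val_lt_iff (x : Fin (a + b)) : (dsum α β x : ℕ) < a ↔ (x : ℕ) < a := by
  induction x using Fin.addCases <;> simp

theorem dsum_inj (h : dsum α β = dsum α' β') : α = α' ∧ β = β' := by
  constructor <;> funext i
  · simpa using congrFun h (Fin.castAdd b i)
  · simpa using congrFun h (Fin.natAdd a i)

theorem involutive_dsum_iff :
    Function.Involutive (dsum α β) ↔ Function.Involutive α ∧ Function.Involutive β := by
  refine ⟨fun h => ⟨fun i => ?_, fun j => ?_⟩, fun ⟨hα, hβ⟩ x => ?_⟩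
  · simpa using h (Fin.castAdd b i)
  · simpa using h (Fin.natAdd a j)
  · induction x using Fin.addCases <;> simp [hα _, hβ _]

theorem contains_dsum_left : Contains (dsum α β) α :=
  (isOccurrence_of_apply_eq (Fin.strictMono_castAdd b) (Fin.strictMono_castAdd b)
    dsum_castAdd).contains

theorem contains_dsum_right : Contains (dsum α β) β :=
  (isOccurrence_of_apply_eq (Fin.strictMono_natAdd a) (Fin.strictMono_natAdd a)
    dsum_natAdd).contains

/-- A pattern whose first entry exceeds its last cannot straddle the two blocks of a direct sum,
where every entry of the first block lies below every entry of the second. -/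
theorem Contains.of_dsum {σ : Fin k → Fin k} (h : Contains (dsum α β) σ) (hσ : FirstGtLast σ) :
    Contains α σ ∨ Contains β σ := by
  obtain ⟨f, hf⟩ : ∃ f, IsOccurrence (dsum α β) σ f := h
  obtain ⟨c₀, c₁, hc, hlt⟩ := hσ
  by_cases h₀ : (f c₀ : ℕ) < a
  · have h₁ : (f c₁ : ℕ) < a := by
      by_contra! h₁
      have hσ := Fin.lt_def.not.mp ((hf.2 c₀ c₁).not.mp hlt.not_gt)
      have hα := (dsum_val_lt_iff (α := α) (β := β) (f c₀)).mpr h₀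
      have hβ := (dsum_val_lt_iff (α := α) (β := β) (f c₁)).not.mpr h₁.not_gt
      omega
    let g : Fin k → Fin a := fun c => ⟨f c, (Fin.le_def.mp (hf.1.monotone (hc c).2)).trans_lt h₁⟩
    replace hf : IsOccurrence (dsum α β) σ (Fin.castAdd b ∘ g) := hf
    exact .inl (hf.of_comp (Fin.strictMono_castAdd b) (Fin.strictMono_castAdd b)
      dsum_castAdd).contains
  · have hle : ∀ c, a ≤ (f c : ℕ) := fun c => le_trans (not_lt.mp h₀) (hf.1.monotone (hc c).1)
    have hf' : f = Fin.natAdd a ∘ fun c => ⟨f c - a, by have := hle c; omega⟩ := by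
      funext c; ext; simp; have := hle c; omega
    rw [hf'] at hf
    exact .inr (hf.of_comp (Fin.strictMono_natAdd a) (Fin.strictMono_natAdd a)
      dsum_natAdd).contains

theorem avoids_dsum {σ : Fin k → Fin k} (hα : Avoids α σ) (hβ : Avoids β σ)
    (hσ : FirstGtLast σ) : Avoids (dsum α β) σ :=
  fun h => (h.of_dsum hσ).elim hα hβ

theorem exists_eq_dsum {π : Fin (a + b) → Fin (a + b)}
    (h : ∀ x, (π x : ℕ) < a ↔ (x : ℕ) < a) : ∃ α β, π = dsum α β := by
  refine ⟨fun i => ⟨π (Fin.castAdd b i), (h _).mpr i.2⟩,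
    fun j => ⟨π (Fin.natAdd a j) - a, by have := (π (Fin.natAdd a j)).2; have := j.2; omega⟩, ?_⟩
  funext x
  induction x using Fin.addCases with
  | left i => ext; simp
  | right j =>
    have := (h (Fin.natAdd a j)).not.mpr (by simp)
    ext; simp; omega

end DirectSum

def midPos {m : ℕ} (i : Fin m) : Fin (m + 2) := i.castSucc.succ

@[simp]
theorem val_midPos {m : ℕ} (i : Fin m) : (midPos i : ℕ) = i + 1 := rfl

theorem strictMono_midPos {m : ℕ} : StrictMono (midPos : Fin m → Fin (m + 2)) :=
  Fin.strictMono_succ.comp Fin.strictMono_castSucc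

@[simp]
theorem midPos_lt_midPos_iff {m : ℕ} {i j : Fin m} : midPos i < midPos j ↔ i < j :=
  strictMono_midPos.lt_iff_lt

@[simp]
theorem zero_lt_midPos {m : ℕ} (i : Fin m) : 0 < midPos i := Fin.succ_pos _

@[simp]
theorem midPos_lt_last {m : ℕ} (i : Fin m) : midPos i < Fin.last (m + 1) := by
  simp [Fin.lt_def]

@[elab_as_elim]
theorem midPosCases {m : ℕ} {motive : Fin (m + 2) → Prop} (zero : motive 0)
    (last : motive (Fin.last (m + 1))) (mid : ∀ i, motive (midPos i)) (x : Fin (m + 2)) :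
    motive x :=
  Fin.cases zero (Fin.lastCases last mid) x

/-- Position `0` goes to `0`, position `i + 1` to `f i + 1`, and the last position to the last. -/
def extendPos {k m : ℕ} (f : Fin k → Fin m) : Fin (k + 2) → Fin (m + 2) :=
  Fin.cons 0 (Fin.snoc (fun c => midPos (f c)) (Fin.last (m + 1)))

section ExtBoth

variable {m k : ℕ} {τ : Fin m → Fin m} {σ : Fin k → Fin k}

@[simp]
theorem extBoth_zero : extBoth τ 0 = Fin.last (m + 1) := by
  ext; simp [extBoth]

@[simp]
theorem extBoth_last : extBoth τ (Fin.last (m + 1)) = 0 := by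
  ext; simp [extBoth]

@[simp]
theorem extBoth_midPos (i : Fin m) : extBoth τ (midPos i) = midPos (τ i) := by
  ext; simp [extBoth]

theorem involutive_extBoth_iff : Function.Involutive (extBoth τ) ↔ Function.Involutive τ := by
  refine ⟨fun h i => strictMono_midPos.injective (by simpa using h (midPos i)), fun h x => ?_⟩
  induction x using midPosCases <;> simp [h _]

theorem contains_extBoth_self : Contains (extBoth τ) τ :=
  (isOccurrence_of_apply_eq strictMono_midPos strictMono_midPos extBoth_midPos).contains

theorem Contains.extBoth_extBoth (h : Contains τ σ) : Contains (extBoth τ) (extBoth σ) := by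
  obtain ⟨f, hf⟩ : ∃ f, IsOccurrence τ σ f := h
  have hzero : extendPos f 0 = 0 := Fin.cons_zero _ _
  have hmid (c) : extendPos f (midPos c) = midPos (f c) := by simp [extendPos, midPos]
  have hlast : extendPos f (Fin.last (k + 1)) = Fin.last (m + 1) := by simp [extendPos]
  refine ⟨extendPos f, fun x y hxy => ?_, fun x y => ?_⟩
  · induction x using midPosCases <;> induction y using midPosCases <;>
      simp_all [hf.1.lt_iff_lt, Fin.last_pos, not_lt.mpr (Fin.le_last _)]
  · induction x using midPosCases <;> induction y using midPosCases <;>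
      simp_all [hf.2, Fin.last_pos, not_lt.mpr (Fin.le_last _)]

theorem exists_eq_extBoth {α : Fin (m + 2) → Fin (m + 2)} (hα : Function.Injective α)
    (h₀ : α 0 = Fin.last (m + 1)) (hl : α (Fin.last (m + 1)) = 0) : ∃ τ, α = extBoth τ := by
  have hmid (i : Fin m) : ∃ j, α (midPos i) = midPos j := by
    have hne₀ : α (midPos i) ≠ 0 := hl ▸ hα.ne (midPos_lt_last i).ne
    have hneₗ : α (midPos i) ≠ Fin.last (m + 1) := h₀ ▸ hα.ne (zero_lt_midPos i).ne'
    generalize α (midPos i) = x at hne₀ hneₗ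
    induction x using midPosCases <;> simp_all
  choose τ hτ using hmid
  exact ⟨τ, funext fun x => by induction x using midPosCases <;> simp [*]⟩

theorem IsOccurrence.contains_of_extBoth {f : Fin k → Fin (m + 2)}
    (hf : IsOccurrence (extBoth τ) σ f) (h₀ : ∀ c, f c ≠ 0) (hl : ∀ c, f c ≠ Fin.last (m + 1)) :
    Contains τ σ := by
  have hmid (c : Fin k) : ∃ j, f c = midPos j := by
    have hne₀ := h₀ c; have hneₗ := hl c
    generalize f c = x at hne₀ hneₗ
    induction x using midPosCases <;> simp_all
  choose g hg using hmid
  rw [show f = midPos ∘ g from funext hg] at hf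
  exact (hf.of_comp strictMono_midPos strictMono_midPos extBoth_midPos).contains

theorem Contains.of_extBoth_extBoth (h : Contains (extBoth τ) (extBoth σ)) : Contains τ σ := by
  obtain ⟨f, hf⟩ : ∃ f, IsOccurrence (extBoth τ) (extBoth σ) f := h
  have hg := hf.comp (isOccurrence_of_apply_eq strictMono_midPos strictMono_midPos extBoth_midPos)
  refine hg.contains_of_extBoth (fun c h => ?_) (fun c h => ?_)
  · rw [Function.comp_apply] at h
    exact Fin.not_lt_zero _ (h ▸ hf.1 (zero_lt_midPos c))
  · rw [Function.comp_apply] at h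
    exact (Fin.le_last _).not_gt (h ▸ hf.1 (midPos_lt_last c))

/-- An occurrence of 3412 in `extBoth τ` cannot use the first position (its value is maximal but
the 3 is followed by the larger 4), nor the last (its value is minimal but the 2 comes after the
smaller 1). -/
theorem Avoids.extBoth_3412 (hτ : Avoids τ pat3412) : Avoids (extBoth τ) pat3412 := by
  rintro ⟨f, hf⟩
  replace hf : IsOccurrence (extBoth τ) pat3412 f := hf
  refine hτ (hf.contains_of_extBoth (fun c h => ?_) (fun c h => ?_))
  · have h₀ : f 0 = 0 := le_antisymm (h ▸ hf.1.monotone (Fin.zero_le c)) (Fin.zero_le _)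
    have := (hf.2 0 1).mp (by decide)
    rw [h₀, extBoth_zero] at this
    exact (Fin.le_last _).not_gt this
  · have h₃ : f (Fin.last 3) = Fin.last (m + 1) :=
      le_antisymm (Fin.le_last _) (h ▸ hf.1.monotone (Fin.le_last c))
    have := (hf.2 2 (Fin.last 3)).mp (by decide)
    rw [h₃, extBoth_last] at this
    exact Fin.not_lt_zero _ this

theorem firstGtLast_extBoth : FirstGtLast (extBoth σ) :=
  ⟨0, Fin.last _, fun c => ⟨Fin.zero_le c, Fin.le_last c⟩, by simp [Fin.last_pos]⟩

end ExtBoth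

theorem firstGtLast_pat3412 : FirstGtLast pat3412 := ⟨0, 3, by decide, by decide⟩

/-- `I_n(3412, S)`. -/
def invAvoiders (S : Set ((m : ℕ) × (Fin m → Fin m))) (n : ℕ) : Set (Fin n → Fin n) :=
  {π | Function.Involutive π ∧ Avoids π pat3412 ∧ AvoidsAll π S}

def invAvoidersMaxFirst (S : Set ((m : ℕ) × (Fin m → Fin m))) (K : ℕ) :
    Set (Fin (K + 1) → Fin (K + 1)) :=
  {α | α ∈ invAvoiders S (K + 1) ∧ α 0 = Fin.last K}

section Counting

variable {S : Set ((m : ℕ) × (Fin m → Fin m))}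

theorem mem_invAvoiders_of_contains {n m : ℕ} {π : Fin n → Fin n} {α : Fin m → Fin m}
    (hπ : π ∈ invAvoiders S n) (hα : Function.Involutive α) (h : Contains π α) :
    α ∈ invAvoiders S m :=
  ⟨hα, hπ.2.1.of_contains h, fun s hs => (hπ.2.2 s hs).of_contains h⟩

theorem dsum_mem_invAvoiders (hS : ∀ s ∈ S, FirstGtLast s.2) {a b : ℕ} {α : Fin a → Fin a}
    {β : Fin b → Fin b} (hα : α ∈ invAvoiders S a) (hβ : β ∈ invAvoiders S b) :
    dsum α β ∈ invAvoiders S (a + b) :=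
  ⟨involutive_dsum_iff.mpr ⟨hα.1, hβ.1⟩, avoids_dsum hα.2.1 hβ.2.1 firstGtLast_pat3412,
    fun s hs => avoids_dsum (hα.2.2 s hs) (hβ.2.2 s hs) (hS s hs)⟩

theorem invAvoiders_eq_univ (hS : ∀ s ∈ S, FirstGtLast s.2) {n : ℕ} [Subsingleton (Fin n)] :
    invAvoiders S n = Set.univ :=
  Set.eq_univ_of_forall fun π => ⟨fun _ => Subsingleton.elim _ _, firstGtLast_pat3412.avoids π,
    fun s hs => (hS s hs).avoids π⟩

theorem exists_dsum_of_mem_invAvoiders {K b : ℕ} {π : Fin (K + 1 + b) → Fin (K + 1 + b)}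
    (hπ : π ∈ invAvoiders S (K + 1 + b)) (h₀ : π 0 = Fin.castAdd b (Fin.last K)) :
    ∃ α ∈ invAvoidersMaxFirst S K, ∃ β ∈ invAvoiders S b, π = dsum α β := by
  have hblock (x : Fin (K + 1 + b)) : (π x : ℕ) < K + 1 ↔ (x : ℕ) < K + 1 := by
    have := le_apply_zero_iff hπ.1 hπ.2.1 x
    rw [h₀, Fin.le_def, Fin.le_def] at this
    simp only [Fin.val_castAdd, Fin.val_last] at this
    omega
  obtain ⟨α, β, rfl⟩ := exists_eq_dsum hblock
  obtain ⟨hα, hβ⟩ := involutive_dsum_iff.mp hπ.1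
  refine ⟨α, ⟨mem_invAvoiders_of_contains hπ hα contains_dsum_left, ?_⟩,
    β, mem_invAvoiders_of_contains hπ hβ contains_dsum_right, rfl⟩
  rw [dsum_zero] at h₀
  exact Fin.castAdd_inj.mp h₀

theorem card_invAvoiders_apply_zero_eq (hS : ∀ s ∈ S, FirstGtLast s.2) {N K b : ℕ}
    (hN : N = K + 1 + b) [NeZero N] (w : Fin N) (hw : (w : ℕ) = K) :
    Nat.card {π // π ∈ invAvoiders S N ∧ π 0 = w} =
      Nat.card (invAvoidersMaxFirst S K) * Nat.card (invAvoiders S b) := by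
  subst hN
  obtain rfl : w = Fin.castAdd b (Fin.last K) := Fin.ext hw
  rw [← Nat.card_prod]
  refine (Nat.card_congr (Equiv.ofBijective (fun p => ⟨dsum p.1.1 p.2.1,
    dsum_mem_invAvoiders hS p.1.2.1 p.2.2, by rw [dsum_zero, p.1.2.2]⟩) ⟨?_, ?_⟩)).symm
  · intro p q h
    obtain ⟨h₁, h₂⟩ := dsum_inj (congrArg Subtype.val h)
    exact Prod.ext (Subtype.ext h₁) (Subtype.ext h₂)
  · rintro ⟨π, hπ, h₀⟩
    obtain ⟨α, hα, β, hβ, rfl⟩ := exists_dsum_of_mem_invAvoiders hπ h₀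
    exact ⟨(⟨α, hα⟩, ⟨β, hβ⟩), rfl⟩

theorem card_invAvoiders_succ (hS : ∀ s ∈ S, FirstGtLast s.2) (n : ℕ) :
    Nat.card (invAvoiders S (n + 1)) = ∑ K ∈ Finset.range (n + 1),
      Nat.card (invAvoidersMaxFirst S K) * Nat.card (invAvoiders S (n - K)) := by
  rw [← Fin.sum_univ_eq_sum_range (fun K =>
      Nat.card (invAvoidersMaxFirst S K) * Nat.card (invAvoiders S (n - K))),
    ← Nat.card_congr (Equiv.sigmaFiberEquiv fun π : invAvoiders S (n + 1) => π.1 0),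
    Nat.card_sigma]
  refine Finset.sum_congr rfl fun K _ => ?_
  exact (Nat.card_congr (Equiv.subtypeSubtypeEquivSubtypeInter (· ∈ invAvoiders S (n + 1)) _)).trans
    (card_invAvoiders_apply_zero_eq hS (by omega) K rfl)

end Counting

noncomputable def maxFirstSeries (S : Set ((m : ℕ) × (Fin m → Fin m))) : PowerSeries ℚ :=
  PowerSeries.mk fun K => (Nat.card (invAvoidersMaxFirst S K) : ℚ)

section GeneratingFunctions

open PowerSeries

variable {S : Set ((m : ℕ) × (Fin m → Fin m))}

theorem coeff_FSet (n : ℕ) : coeff n (FSet S) = Nat.card (invAvoiders S n) := coeff_mk _ _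

theorem card_invAvoiders_zero (hS : ∀ s ∈ S, FirstGtLast s.2) :
    Nat.card (invAvoiders S 0) = 1 := by
  simp [invAvoiders_eq_univ hS]

theorem card_invAvoidersMaxFirst_zero (hS : ∀ s ∈ S, FirstGtLast s.2) :
    Nat.card (invAvoidersMaxFirst S 0) = 1 := by
  have : invAvoidersMaxFirst S 0 = Set.univ :=
    Set.eq_univ_of_forall fun α =>
      ⟨(invAvoiders_eq_univ (n := 1) hS).symm ▸ trivial, Subsingleton.elim (α := Fin 1) _ _⟩
  simp [this]

theorem FSet_eq_one_add (hS : ∀ s ∈ S, FirstGtLast s.2) :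
    FSet S = 1 + X * maxFirstSeries S * FSet S := by
  ext (_ | n)
  · simp [coeff_FSet, card_invAvoiders_zero hS]
  · rw [mul_assoc, map_add, coeff_succ_X_mul, coeff_mul,
      Finset.Nat.sum_antidiagonal_eq_sum_range_succ fun i j => coeff i _ * coeff j _]
    simp [coeff_FSet, card_invAvoiders_succ hS, maxFirstSeries]

end GeneratingFunctions

section KOne

variable {T : Set ((m : ℕ) × (Fin m → Fin m))} {k : ℕ}

theorem extBoth_injective : Function.Injective (extBoth : (Fin k → Fin k) → _) :=
  fun τ τ' h => funext fun i => strictMono_midPos.injective (by simpa using congrFun h (midPos i))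

theorem extBoth_mem_invAvoidersMaxFirst {τ : Fin k → Fin k} (hτ : τ ∈ invAvoiders T k) :
    extBoth τ ∈ invAvoidersMaxFirst (kOne '' T) (k + 1) := by
  refine ⟨⟨involutive_extBoth_iff.mpr hτ.1, hτ.2.1.extBoth_3412, ?_⟩, extBoth_zero⟩
  rintro _ ⟨t, ht, rfl⟩ h
  exact hτ.2.2 t ht h.of_extBoth_extBoth

theorem exists_extBoth_of_mem_invAvoidersMaxFirst {α : Fin (k + 2) → Fin (k + 2)}
    (hα : α ∈ invAvoidersMaxFirst (kOne '' T) (k + 1)) :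
    ∃ τ ∈ invAvoiders T k, α = extBoth τ := by
  obtain ⟨⟨hinv, h3412, hT⟩, h₀⟩ := hα
  have hl : α (Fin.last (k + 1)) = 0 := by rw [← h₀, hinv]
  obtain ⟨τ, rfl⟩ := exists_eq_extBoth hinv.injective h₀ hl
  refine ⟨τ, ⟨involutive_extBoth_iff.mp hinv, h3412.of_contains contains_extBoth_self,
    fun t ht h => hT (kOne t) ⟨t, ht, rfl⟩ h.extBoth_extBoth⟩, rfl⟩

theorem card_invAvoidersMaxFirst_kOne_image_succ (j : ℕ) :
    Nat.card (invAvoidersMaxFirst (kOne '' T) (j + 1)) = Nat.card (invAvoiders T j) := by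
  refine (Nat.card_congr (Equiv.ofBijective
    (fun τ => ⟨extBoth τ.1, extBoth_mem_invAvoidersMaxFirst τ.2⟩) ⟨?_, fun α => ?_⟩)).symm
  · exact fun τ τ' h => Subtype.ext (extBoth_injective (congrArg Subtype.val h))
  · obtain ⟨τ, hτ, h⟩ := exists_extBoth_of_mem_invAvoidersMaxFirst α.2
    exact ⟨⟨τ, hτ⟩, Subtype.ext h.symm⟩

theorem firstGtLast_of_mem_kOne_image : ∀ s ∈ kOne '' T, FirstGtLast s.2 := by
  rintro _ ⟨t, -, rfl⟩
  exact firstGtLast_extBoth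

theorem maxFirstSeries_kOne_image : maxFirstSeries (kOne '' T) = 1 + PowerSeries.X * FSet T := by
  ext (_ | j)
  · rw [maxFirstSeries, PowerSeries.coeff_mk,
      card_invAvoidersMaxFirst_zero firstGtLast_of_mem_kOne_image]
    simp
  · rw [maxFirstSeries, PowerSeries.coeff_mk, card_invAvoidersMaxFirst_kOne_image_succ]
    simp [coeff_FSet]

end KOne

theorem stmt14_general (T : Set ((m : ℕ) × (Fin m → Fin m))) :
    FSet (kOne '' T) * (1 - PowerSeries.X - PowerSeries.X ^ 2 * FSet T) = 1 := by
  have h := FSet_eq_one_add (firstGtLast_of_mem_kOne_image (T := T))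
  rw [maxFirstSeries_kOne_image] at h
  linear_combination h

/-- for any set `T` of permutations,
`F_{kT1}(x) · (1 - x - x²·F_T(x)) = 1` as formal power series over `ℚ`. -/
theorem stmt14 (T : Set ((m : ℕ) × (Fin m → Fin m)))
    (hT : ∀ s ∈ T, Function.Bijective s.2) :
    FSet (kOne '' T) * (1 - PowerSeries.X - PowerSeries.X ^ 2 * FSet T) = 1 :=
  stmt14_general T
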